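/- arXiv:math/0702319 — 4 statements merged into one kernel-verified Lean document; each statement's English description precedes it below -/
import Mathlib

section
/- Let M →σ P ←τ N be a quasi-coherent representation. Suppose M = ⊕_{i∈I} M_i is an internal direct sum of countably generated R-submodules and N = ⊕_{j∈J} N_j is an internal direct sum of countably generated R'-submodules. Then for every countable subset I₀ ⊆ I and every countable subset J₀ ⊆ J there exist countable subsets Ī ⊆ I and J̄ ⊆ J with I₀ ⊆ Ī and J₀ ⊆ J̄ such that the L-submodule of P generated by σ(Σ_{i∈Ī} M_i) is equal to the L-submodule of P generated by τ(Σ_{j∈J̄} N_j). -/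
/-!
Setup (context of the paper): a quasi-coherent sheaf on `P¹(k)` is identified with a
quasi-coherent representation `M →σ P ←τ N` where `M` is a module over `R = k[X]`,
`N` is a module over `R' = k[Y]` (with `Y` playing the role of `X⁻¹`), `P` is a module
over the Laurent polynomial ring `L = k[X,X⁻¹]`, `σ` exhibits `P` as the localization of
`M` at the powers of `X` and `τ` exhibits `P` as the localization of `N` at the powers
of `Y`.
-/

noncomputable section

open Polynomial LaurentPolynomial

/-- `R' = k[Y]`, a second copy of the polynomial ring over `k`. -/
def RPrime (k : Type*) [Field k] : Type _ := Polynomial k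

instance (k : Type*) [Field k] : CommRing (RPrime k) :=
  inferInstanceAs (CommRing (Polynomial k))

/-- The variable `Y` of `R' = k[Y]`. -/
def Yvar (k : Type*) [Field k] : RPrime k := (Polynomial.X : Polynomial k)

/-- `L = k[X,X⁻¹]` is an `R'`-algebra via `Y ↦ X⁻¹`. -/
instance (k : Type*) [Field k] : Algebra (RPrime k) (LaurentPolynomial k) :=
  RingHom.toAlgebra
    (show Polynomial k →+* LaurentPolynomial k from
      (Polynomial.aeval (LaurentPolynomial.T (-1) : LaurentPolynomial k)).toRingHom)

/-!
The `L`-span of `σ(⨁_{i ∈ s} M_i)` for countable `s` is generated by countably many elements,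
as each `M_i` is countably generated. Since `X` and `Y = X⁻¹` are units of `L`, every element of
`P` is an `L`-multiple of some `τ n`, and `n` lies in finitely many `N_j`. Hence that span lies in
the span of `τ(⨁_{j ∈ t} N_j)` for some countable `t`, and symmetrically. Alternating the two
inclusions from `I₀` and `J₀` gives increasing countable sequences of index sets; their unions
have equal spans, because the span of an increasing union is the union of the spans.
-/

section BackAndForth

variable {α I J : Type*} [CompleteLattice α] {Φ : Set I → α} {Ψ : Set J → α}

theorem iUnion_le_iUnion_of_le_succ
    (hΦ : ∀ s : ℕ → Set I, Monotone s → Φ (⋃ n, s n) ≤ ⨆ n, Φ (s n)) (hΨ : Monotone Ψ)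
    {s : ℕ → Set I} {t : ℕ → Set J} (hs : Monotone s) (hst : ∀ n, Φ (s n) ≤ Ψ (t (n + 1))) :
    Φ (⋃ n, s n) ≤ Ψ (⋃ n, t n) :=
  (hΦ s hs).trans <| iSup_le fun n => (hst n).trans <| hΨ <| Set.subset_iUnion t (n + 1)

theorem exists_countable_supersets_eq_of_back_and_forth (hΦ : Monotone Φ) (hΨ : Monotone Ψ)
    (hΦ_iUnion : ∀ s : ℕ → Set I, Monotone s → Φ (⋃ n, s n) ≤ ⨆ n, Φ (s n))
    (hΨ_iUnion : ∀ t : ℕ → Set J, Monotone t → Ψ (⋃ n, t n) ≤ ⨆ n, Ψ (t n))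
    (hΦΨ : ∀ s : Set I, s.Countable → ∃ t : Set J, t.Countable ∧ Φ s ≤ Ψ t)
    (hΨΦ : ∀ t : Set J, t.Countable → ∃ s : Set I, s.Countable ∧ Ψ t ≤ Φ s)
    {I₀ : Set I} {J₀ : Set J} (hI₀ : I₀.Countable) (hJ₀ : J₀.Countable) :
    ∃ s t, s.Countable ∧ t.Countable ∧ I₀ ⊆ s ∧ J₀ ⊆ t ∧ Φ s = Ψ t := by
  choose F hFc hF using fun s : {s : Set I // s.Countable} => hΦΨ s.1 s.2
  choose G hGc hG using fun t : {t : Set J // t.Countable} => hΨΦ t.1 t.2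
  let step (p : {s : Set I // s.Countable} × {t : Set J // t.Countable}) :
      {s : Set I // s.Countable} × {t : Set J // t.Countable} :=
    (⟨p.1 ∪ G p.2, p.1.2.union (hGc p.2)⟩, ⟨p.2 ∪ F p.1, p.2.2.union (hFc p.1)⟩)
  let seq (n : ℕ) := step^[n] (⟨I₀, hI₀⟩, ⟨J₀, hJ₀⟩)
  let s (n : ℕ) : Set I := (seq n).1
  let t (n : ℕ) : Set J := (seq n).2
  have hs_succ (n : ℕ) : s (n + 1) = s n ∪ G (seq n).2 := by
    simp only [s, seq, Function.iterate_succ_apply']; rfl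
  have ht_succ (n : ℕ) : t (n + 1) = t n ∪ F (seq n).1 := by
    simp only [t, seq, Function.iterate_succ_apply']; rfl
  have hs : Monotone s :=
    monotone_nat_of_le_succ fun n => (hs_succ n).symm ▸ Set.subset_union_left
  have ht : Monotone t :=
    monotone_nat_of_le_succ fun n => (ht_succ n).symm ▸ Set.subset_union_left
  refine ⟨⋃ n, s n, ⋃ n, t n, Set.countable_iUnion fun n => (seq n).1.2,
    Set.countable_iUnion fun n => (seq n).2.2, Set.subset_iUnion s 0, Set.subset_iUnion t 0,
    le_antisymm ?_ ?_⟩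
  · refine iUnion_le_iUnion_of_le_succ hΦ_iUnion hΨ hs fun n => (hF (seq n).1).trans ?_
    exact hΨ ((ht_succ n).symm ▸ Set.subset_union_right)
  · refine iUnion_le_iUnion_of_le_succ hΨ_iUnion hΦ ht fun n => (hG (seq n).2).trans ?_
    exact hΦ ((hs_succ n).symm ▸ Set.subset_union_right)

end BackAndForth

section SpanImage

variable (L : Type*) {A M P I : Type*}

def spanImage [Semiring A] [Semiring L] [AddCommMonoid M] [Module A M] [AddCommMonoid P]
    [Module A P] [Module L P] (f : M →ₗ[A] P) (Mi : I → Submodule A M) (s : Set I) :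
    Submodule L P :=
  Submodule.span L (f '' ↑(⨆ i ∈ s, Mi i))

variable {L}

section Semiring

variable [Semiring A] [Semiring L] [AddCommMonoid M] [Module A M] [AddCommMonoid P]
  [Module A P] [Module L P] (f : M →ₗ[A] P) (Mi : I → Submodule A M)

theorem spanImage_mono : Monotone (spanImage L f Mi) := fun _ _ h =>
  Submodule.span_mono <| Set.image_mono <| SetLike.coe_subset_coe.mpr <| biSup_mono h

theorem spanImage_iUnion {s : ℕ → Set I} (hs : Monotone s) :
    spanImage L f Mi (⋃ n, s n) = ⨆ n, spanImage L f Mi (s n) := by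
  have hchain : ((⨆ n, ⨆ i ∈ s n, Mi i : Submodule A M) : Set M) =
      ⋃ n, ↑(⨆ i ∈ s n, Mi i) :=
    Submodule.coe_iSup_of_chain ⟨fun n => ⨆ i ∈ s n, Mi i, fun _ _ h => biSup_mono (hs h)⟩
  rw [spanImage, iSup_iUnion, hchain, Set.image_iUnion, Submodule.span_iUnion]
  rfl

end Semiring

section Algebra

variable [CommSemiring A] [Semiring L] [Algebra A L] [AddCommMonoid M] [Module A M]
  [AddCommMonoid P] [Module A P] [Module L P] [IsScalarTower A L P]
  (f : M →ₗ[A] P) (Mi : I → Submodule A M)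

theorem exists_countable_span_eq_spanImage
    (hMi : ∀ i, ∃ c : Set M, c.Countable ∧ Submodule.span A c = Mi i)
    {s : Set I} (hs : s.Countable) :
    ∃ C : Set P, C.Countable ∧ Submodule.span L C = spanImage L f Mi s := by
  choose c hc hcMi using hMi
  refine ⟨f '' ⋃ i ∈ s, c i, (hs.biUnion fun i _ => hc i).image f, ?_⟩
  rw [spanImage]
  simp_rw [← hcMi]
  rw [← Submodule.span_iUnion₂, ← Submodule.map_coe, Submodule.map_span,
    Submodule.span_span_of_tower]

theorem IsLocalizedModule.exists_mem_span_singleton (S : Submonoid A) [IsLocalizedModule S f]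
    (hS : ∀ s ∈ S, IsUnit (algebraMap A L s)) (p : P) :
    ∃ m : M, p ∈ Submodule.span L {f m} := by
  obtain ⟨⟨m, s⟩, hs : s • p = f m⟩ := IsLocalizedModule.surj S f p
  refine ⟨m, ?_⟩
  rw [← Submodule.smul_mem_iff_of_isUnit _ (hS s s.2), algebraMap_smul, ← Submonoid.smul_def,
    hs]
  exact Submodule.mem_span_singleton_self _

theorem exists_finset_mem_spanImage (S : Submonoid A) [IsLocalizedModule S f]
    (hS : ∀ s ∈ S, IsUnit (algebraMap A L s)) (htop : ⨆ i, Mi i = ⊤) (p : P) :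
    ∃ t : Finset I, p ∈ spanImage L f Mi t := by
  obtain ⟨m, hm⟩ := IsLocalizedModule.exists_mem_span_singleton f S hS p
  obtain ⟨t, ht⟩ :=
    Submodule.mem_iSup_iff_exists_finset.mp (htop ▸ Submodule.mem_top : m ∈ ⨆ i, Mi i)
  refine ⟨t, Submodule.span_mono ?_ hm⟩
  exact Set.singleton_subset_iff.mpr (Set.mem_image_of_mem f (by simpa using ht))

theorem exists_countable_span_le_spanImage (S : Submonoid A) [IsLocalizedModule S f]
    (hS : ∀ s ∈ S, IsUnit (algebraMap A L s)) (htop : ⨆ i, Mi i = ⊤)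
    {C : Set P} (hC : C.Countable) :
    ∃ s : Set I, s.Countable ∧ Submodule.span L C ≤ spanImage L f Mi s := by
  choose t ht using exists_finset_mem_spanImage f Mi S hS htop
  refine ⟨⋃ p ∈ C, t p, hC.biUnion fun p _ => (t p).countable_toSet, Submodule.span_le.mpr ?_⟩
  intro p hp
  exact spanImage_mono f Mi (Set.subset_biUnion_of_mem (u := fun p => (t p : Set I)) hp) (ht p)

theorem exists_countable_spanImage_le_spanImage {B N J : Type*} [CommSemiring B] [Algebra B L]
    [AddCommMonoid N] [Module B N] [Module B P] [IsScalarTower B L P]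
    (g : N →ₗ[B] P) (Nj : J → Submodule B N)
    (hMi : ∀ i, ∃ c : Set M, c.Countable ∧ Submodule.span A c = Mi i)
    (T : Submonoid B) [IsLocalizedModule T g] (hT : ∀ t ∈ T, IsUnit (algebraMap B L t))
    (hNtop : ⨆ j, Nj j = ⊤) {s : Set I} (hs : s.Countable) :
    ∃ t : Set J, t.Countable ∧ spanImage L f Mi s ≤ spanImage L g Nj t := by
  obtain ⟨C, hC, hCs⟩ := exists_countable_span_eq_spanImage (L := L) f Mi hMi hs
  obtain ⟨t, ht, hCt⟩ := exists_countable_span_le_spanImage g Nj T hT hNtop hC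
  exact ⟨t, ht, hCs ▸ hCt⟩

end Algebra

end SpanImage

theorem isUnit_algebraMap_of_mem_powers {A L : Type*} [CommSemiring A] [Semiring L]
    [Algebra A L] {x : A} (hx : IsUnit (algebraMap A L x)) :
    ∀ s ∈ Submonoid.powers x, IsUnit (algebraMap A L s) := by
  rintro _ ⟨n, rfl⟩
  rw [map_pow]
  exact hx.pow n

theorem isUnit_algebraMap_X (k : Type*) [Field k] :
    IsUnit (algebraMap k[X] (LaurentPolynomial k) X) := by
  rw [LaurentPolynomial.algebraMap_eq_toLaurent, Polynomial.toLaurent_X]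
  exact LaurentPolynomial.isUnit_T 1

theorem isUnit_algebraMap_Yvar (k : Type*) [Field k] :
    IsUnit (algebraMap (RPrime k) (LaurentPolynomial k) (Yvar k)) := by
  have hY : algebraMap (RPrime k) (LaurentPolynomial k) (Yvar k) = T (-1) :=
    Polynomial.aeval_X (T (-1) : LaurentPolynomial k)
  rw [hY]
  exact LaurentPolynomial.isUnit_T (-1)

theorem stmt0_general {k : Type*} [Field k]
    {M N P : Type*} [AddCommGroup M] [Module (Polynomial k) M]
    [AddCommGroup N] [Module (RPrime k) N]
    [AddCommGroup P] [Module (LaurentPolynomial k) P]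
    [Module (Polynomial k) P] [IsScalarTower (Polynomial k) (LaurentPolynomial k) P]
    [Module (RPrime k) P] [IsScalarTower (RPrime k) (LaurentPolynomial k) P]
    (σ : M →ₗ[Polynomial k] P) (τ : N →ₗ[RPrime k] P)
    [IsLocalizedModule (Submonoid.powers (Polynomial.X : Polynomial k)) σ]
    [IsLocalizedModule (Submonoid.powers (Yvar k)) τ]
    {I J : Type*} (Mi : I → Submodule (Polynomial k) M) (Nj : J → Submodule (RPrime k) N)
    (hMtop : ⨆ i, Mi i = ⊤)
    (hNtop : ⨆ j, Nj j = ⊤)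
    (hMcg : ∀ i, ∃ s : Set M, s.Countable ∧ Submodule.span (Polynomial k) s = Mi i)
    (hNcg : ∀ j, ∃ s : Set N, s.Countable ∧ Submodule.span (RPrime k) s = Nj j)
    (I₀ : Set I) (J₀ : Set J) (hI₀ : I₀.Countable) (hJ₀ : J₀.Countable) :
    ∃ (Ibar : Set I) (Jbar : Set J), Ibar.Countable ∧ Jbar.Countable ∧
      I₀ ⊆ Ibar ∧ J₀ ⊆ Jbar ∧
      Submodule.span (LaurentPolynomial k) (σ '' ↑(⨆ i ∈ Ibar, Mi i)) =
        Submodule.span (LaurentPolynomial k) (τ '' ↑(⨆ j ∈ Jbar, Nj j)) := by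
  exact exists_countable_supersets_eq_of_back_and_forth
      (spanImage_mono σ Mi) (spanImage_mono τ Nj)
      (fun s hs => (spanImage_iUnion σ Mi hs).le) (fun t ht => (spanImage_iUnion τ Nj ht).le)
      (fun s hs => exists_countable_spanImage_le_spanImage σ Mi τ Nj hMcg _
        (isUnit_algebraMap_of_mem_powers (isUnit_algebraMap_Yvar k)) hNtop hs)
      (fun t ht => exists_countable_spanImage_le_spanImage τ Nj σ Mi hNcg _
        (isUnit_algebraMap_of_mem_powers (isUnit_algebraMap_X k)) hMtop ht)
      hI₀ hJ₀

/-- zig-zag lemma. If `M = ⊕_{i ∈ I} M_i` and `N = ⊕_{j ∈ J} N_j` are internal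
direct sums of countably generated submodules, then any countable subsets `I₀ ⊆ I`,
`J₀ ⊆ J` are contained in countable subsets `Ī ⊆ I`, `J̄ ⊆ J` such that the `L`-submodule
of `P` generated by `σ(Σ_{i ∈ Ī} M_i)` equals the one generated by `τ(Σ_{j ∈ J̄} N_j)`. -/
theorem stmt0 {k : Type*} [Field k]
    {M N P : Type*} [AddCommGroup M] [Module (Polynomial k) M]
    [AddCommGroup N] [Module (RPrime k) N]
    [AddCommGroup P] [Module (LaurentPolynomial k) P]
    [Module (Polynomial k) P] [IsScalarTower (Polynomial k) (LaurentPolynomial k) P]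
    [Module (RPrime k) P] [IsScalarTower (RPrime k) (LaurentPolynomial k) P]
    (σ : M →ₗ[Polynomial k] P) (τ : N →ₗ[RPrime k] P)
    [IsLocalizedModule (Submonoid.powers (Polynomial.X : Polynomial k)) σ]
    [IsLocalizedModule (Submonoid.powers (Yvar k)) τ]
    {I J : Type*} (Mi : I → Submodule (Polynomial k) M) (Nj : J → Submodule (RPrime k) N)
    (hMind : iSupIndep Mi) (hMtop : ⨆ i, Mi i = ⊤)
    (hNind : iSupIndep Nj) (hNtop : ⨆ j, Nj j = ⊤)
    (hMcg : ∀ i, ∃ s : Set M, s.Countable ∧ Submodule.span (Polynomial k) s = Mi i)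
    (hNcg : ∀ j, ∃ s : Set N, s.Countable ∧ Submodule.span (RPrime k) s = Nj j)
    (I₀ : Set I) (J₀ : Set J) (hI₀ : I₀.Countable) (hJ₀ : J₀.Countable) :
    ∃ (Ibar : Set I) (Jbar : Set J), Ibar.Countable ∧ Jbar.Countable ∧
      I₀ ⊆ Ibar ∧ J₀ ⊆ Jbar ∧
      Submodule.span (LaurentPolynomial k) (σ '' ↑(⨆ i ∈ Ibar, Mi i)) =
        Submodule.span (LaurentPolynomial k) (τ '' ↑(⨆ j ∈ Jbar, Nj j)) :=
  stmt0_general σ τ Mi Nj hMtop hNtop hMcg hNcg I₀ J₀ hI₀ hJ₀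
end
end

section
/- Let M →σ P ←τ N be a quasi-coherent representation. Then every short exact sequence of representations 0 → (M →σ P ←τ N) → (A → C ← B) → O(0) → 0 (componentwise short exact, with all squares commuting and the middle representation quasi-coherent) is isomorphic, as an extension, to a standard extension E(y,z) for some elements y, z ∈ P: here E(y,z) is the quasi-coherent representation M ⊕ R → P ⊕ L ← N ⊕ R' whose left map sends (m, p) to (σ(m) + p·y, p) (the product p·y taken in the L-module P via R → L) and whose right map sends (n, q) to (τ(n) + q·z, q) (the product q·z taken in the L-module P via R' → L), equipped with the evident inclusion of (M →σ P ←τ N) and projection onto O(0). -/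
/-!
Each row of the extension `0 → M → A → R → 0`, `0 → P → C → L → 0`, `0 → N → B → R' → 0`
splits as soon as `1` is lifted to the middle term. Lift `1` to `a₀ ∈ A` and `b₀ ∈ B`, and use
`f a₀` as the lift in `C`; then the left structure map becomes `(m, p) ↦ (σ m, p)`, so `y = 0`.
The two lifts `f a₀` and `g b₀` of `1` in `C` differ by an element `w` of `P`, and this
discrepancy, `z = -w`, is all that survives in the right structure map.
-/

noncomputable section

open Polynomial LaurentPolynomial

namespace Function.Exact

variable {R M A : Type*} [Ring R] [AddCommGroup M] [AddCommGroup A] [Module R M] [Module R A]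
  {i : M →ₗ[R] A} {p : A →ₗ[R] R}

def splitEquivOfMapEqOne (h : Function.Exact i p) (hi : Function.Injective i)
    (a₀ : A) (ha₀ : p a₀ = 1) : A ≃ₗ[R] M × R :=
  (h.splitSurjectiveEquiv hi
    ⟨LinearMap.toSpanSingleton R A a₀, LinearMap.ext fun r => by simp [ha₀]⟩).1

variable (h : Function.Exact i p) (hi : Function.Injective i) {a₀ : A} (ha₀ : p a₀ = 1)

theorem splitEquivOfMapEqOne_symm_apply (x : M × R) :
    (h.splitEquivOfMapEqOne hi a₀ ha₀).symm x = i x.1 + x.2 • a₀ := by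
  simp only [splitEquivOfMapEqOne, splitSurjectiveEquiv, Equiv.coe_fn_mk]
  rfl

theorem splitEquivOfMapEqOne_apply_add_smul (m : M) (r : R) :
    h.splitEquivOfMapEqOne hi a₀ ha₀ (i m + r • a₀) = (m, r) :=
  (LinearEquiv.eq_symm_apply _).1 (h.splitEquivOfMapEqOne_symm_apply hi ha₀ (m, r)).symm

theorem splitEquivOfMapEqOne_apply_map (m : M) :
    h.splitEquivOfMapEqOne hi a₀ ha₀ (i m) = (m, 0) := by
  simpa using h.splitEquivOfMapEqOne_apply_add_smul hi ha₀ m 0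

theorem add_smul_splitEquivOfMapEqOne_apply (a : A) :
    i (h.splitEquivOfMapEqOne hi a₀ ha₀ a).1 + (h.splitEquivOfMapEqOne hi a₀ ha₀ a).2 • a₀ = a :=
  (h.splitEquivOfMapEqOne_symm_apply hi ha₀ _).symm.trans
    ((h.splitEquivOfMapEqOne hi a₀ ha₀).symm_apply_apply a)

theorem splitEquivOfMapEqOne_apply_snd (a : A) :
    (h.splitEquivOfMapEqOne hi a₀ ha₀ a).2 = p a := by
  conv_rhs => rw [← h.add_smul_splitEquivOfMapEqOne_apply hi ha₀ a]
  simp [h.apply_apply_eq_zero, ha₀]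

end Function.Exact

theorem stmt9_general {k : Type*} [Field k]
    {M N P : Type*} [AddCommGroup M] [Module (Polynomial k) M]
    [AddCommGroup N] [Module (RPrime k) N]
    [AddCommGroup P] [Module (LaurentPolynomial k) P]
    [Module (Polynomial k) P] [IsScalarTower (Polynomial k) (LaurentPolynomial k) P]
    [Module (RPrime k) P] [IsScalarTower (RPrime k) (LaurentPolynomial k) P]
    (σ : M →ₗ[Polynomial k] P) (τ : N →ₗ[RPrime k] P)
    -- the middle quasi-coherent representation `A → C ← B`
    {A C B : Type*} [AddCommGroup A] [Module (Polynomial k) A]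
    [AddCommGroup B] [Module (RPrime k) B]
    [AddCommGroup C] [Module (LaurentPolynomial k) C]
    [Module (Polynomial k) C] [IsScalarTower (Polynomial k) (LaurentPolynomial k) C]
    [Module (RPrime k) C] [IsScalarTower (RPrime k) (LaurentPolynomial k) C]
    (f : A →ₗ[Polynomial k] C) (g : B →ₗ[RPrime k] C)
    -- the inclusion morphism of representations
    (iM : M →ₗ[Polynomial k] A) (iP : P →ₗ[LaurentPolynomial k] C) (iN : N →ₗ[RPrime k] B)
    (hi₁ : ∀ m, iP (σ m) = f (iM m)) (hi₂ : ∀ x, iP (τ x) = g (iN x))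
    -- the projection morphism of representations onto `O(0)`
    (pA : A →ₗ[Polynomial k] Polynomial k)
    (pC : C →ₗ[LaurentPolynomial k] LaurentPolynomial k)
    (pB : B →ₗ[RPrime k] RPrime k)
    (hp₁ : ∀ a, pC (f a) = algebraMap (Polynomial k) (LaurentPolynomial k) (pA a))
    (hp₂ : ∀ b, pC (g b) = algebraMap (RPrime k) (LaurentPolynomial k) (pB b))
    -- componentwise short exactness
    (hiM : Function.Injective iM) (hiP : Function.Injective iP) (hiN : Function.Injective iN)
    (hpA : Function.Surjective pA)
    (hpB : Function.Surjective pB)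
    (hexA : LinearMap.range iM = LinearMap.ker pA)
    (hexC : LinearMap.range iP = LinearMap.ker pC)
    (hexB : LinearMap.range iN = LinearMap.ker pB) :
    ∃ (y z : P) (φA : A ≃ₗ[Polynomial k] M × Polynomial k)
      (φC : C ≃ₗ[LaurentPolynomial k] P × LaurentPolynomial k)
      (φB : B ≃ₗ[RPrime k] N × RPrime k),
      -- `φ` identifies the structure maps of the middle term with those of `E(y,z)`
      (∀ a, φC (f a) =
        (σ (φA a).1 + (φA a).2 • y,
          algebraMap (Polynomial k) (LaurentPolynomial k) (φA a).2)) ∧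
      (∀ b, φC (g b) =
        (τ (φB b).1 + (φB b).2 • z,
          algebraMap (RPrime k) (LaurentPolynomial k) (φB b).2)) ∧
      -- `φ` is compatible with the inclusion of `(M →σ P ←τ N)` ...
      (∀ m, φA (iM m) = (m, 0)) ∧ (∀ p, φC (iP p) = (p, 0)) ∧ (∀ x, φB (iN x) = (x, 0)) ∧
      -- ... and with the projection onto `O(0)`
      (∀ a, pA a = (φA a).2) ∧ (∀ c, pC c = (φC c).2) ∧ (∀ b, pB b = (φB b).2) := by
  obtain ⟨a₀, ha₀⟩ := hpA 1
  obtain ⟨b₀, hb₀⟩ := hpB 1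
  have hfa₀ : pC (f a₀) = 1 := by rw [hp₁, ha₀, map_one]
  have hgb₀ : pC (g b₀) = 1 := by rw [hp₂, hb₀, map_one]
  have exA := LinearMap.exact_iff.2 hexA.symm
  have exC := LinearMap.exact_iff.2 hexC.symm
  have exB := LinearMap.exact_iff.2 hexB.symm
  obtain ⟨w, hw⟩ : f a₀ - g b₀ ∈ LinearMap.range iP := by
    rw [hexC, LinearMap.mem_ker, map_sub, hfa₀, hgb₀, sub_self]
  set φA := exA.splitEquivOfMapEqOne hiM a₀ ha₀
  set φC := exC.splitEquivOfMapEqOne hiP (f a₀) hfa₀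
  set φB := exB.splitEquivOfMapEqOne hiN b₀ hb₀
  refine ⟨0, -w, φA, φC, φB, fun a => ?_, fun b => ?_, exA.splitEquivOfMapEqOne_apply_map hiM ha₀,
    exC.splitEquivOfMapEqOne_apply_map hiP hfa₀, exB.splitEquivOfMapEqOne_apply_map hiN hb₀,
    fun a => (exA.splitEquivOfMapEqOne_apply_snd hiM ha₀ a).symm,
    fun c => (exC.splitEquivOfMapEqOne_apply_snd hiP hfa₀ c).symm,
    fun b => (exB.splitEquivOfMapEqOne_apply_snd hiN hb₀ b).symm⟩
  · have hfa : f a = iP (σ (φA a).1) + algebraMap _ (LaurentPolynomial k) (φA a).2 • f a₀ := by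
      conv_lhs => rw [← exA.add_smul_splitEquivOfMapEqOne_apply hiM ha₀ a]
      rw [map_add, map_smul, ← hi₁, algebraMap_smul]
    rw [hfa, exC.splitEquivOfMapEqOne_apply_add_smul, smul_zero, add_zero]
  · have hgb : g b = iP (τ (φB b).1 + (φB b).2 • -w) +
        algebraMap _ (LaurentPolynomial k) (φB b).2 • f a₀ := by
      conv_lhs => rw [← exB.add_smul_splitEquivOfMapEqOne_apply hiN hb₀ b]
      rw [map_add, map_smul, ← hi₂, map_add, LinearMap.map_smul_of_tower, map_neg, hw,
        algebraMap_smul, smul_neg, smul_sub]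
      abel
    rw [hgb, exC.splitEquivOfMapEqOne_apply_add_smul]

/-- every extension `0 → (M →σ P ←τ N) → (A → C ← B) → O(0) → 0` of
quasi-coherent representations is isomorphic, as an extension, to a standard extension
`E(y,z) : M ⊕ R → P ⊕ L ← N ⊕ R'` (left map `(m,p) ↦ (σ(m) + p·y, p)`, right map
`(n,q) ↦ (τ(n) + q·z, q)`) for some `y, z ∈ P`. -/
theorem stmt9 {k : Type*} [Field k]
    {M N P : Type*} [AddCommGroup M] [Module (Polynomial k) M]
    [AddCommGroup N] [Module (RPrime k) N]
    [AddCommGroup P] [Module (LaurentPolynomial k) P]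
    [Module (Polynomial k) P] [IsScalarTower (Polynomial k) (LaurentPolynomial k) P]
    [Module (RPrime k) P] [IsScalarTower (RPrime k) (LaurentPolynomial k) P]
    (σ : M →ₗ[Polynomial k] P) (τ : N →ₗ[RPrime k] P)
    [IsLocalizedModule (Submonoid.powers (Polynomial.X : Polynomial k)) σ]
    [IsLocalizedModule (Submonoid.powers (Yvar k)) τ]
    -- the middle quasi-coherent representation `A → C ← B`
    {A C B : Type*} [AddCommGroup A] [Module (Polynomial k) A]
    [AddCommGroup B] [Module (RPrime k) B]
    [AddCommGroup C] [Module (LaurentPolynomial k) C]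
    [Module (Polynomial k) C] [IsScalarTower (Polynomial k) (LaurentPolynomial k) C]
    [Module (RPrime k) C] [IsScalarTower (RPrime k) (LaurentPolynomial k) C]
    (f : A →ₗ[Polynomial k] C) (g : B →ₗ[RPrime k] C)
    [IsLocalizedModule (Submonoid.powers (Polynomial.X : Polynomial k)) f]
    [IsLocalizedModule (Submonoid.powers (Yvar k)) g]
    -- the inclusion morphism of representations
    (iM : M →ₗ[Polynomial k] A) (iP : P →ₗ[LaurentPolynomial k] C) (iN : N →ₗ[RPrime k] B)
    (hi₁ : ∀ m, iP (σ m) = f (iM m)) (hi₂ : ∀ x, iP (τ x) = g (iN x))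
    -- the projection morphism of representations onto `O(0)`
    (pA : A →ₗ[Polynomial k] Polynomial k)
    (pC : C →ₗ[LaurentPolynomial k] LaurentPolynomial k)
    (pB : B →ₗ[RPrime k] RPrime k)
    (hp₁ : ∀ a, pC (f a) = algebraMap (Polynomial k) (LaurentPolynomial k) (pA a))
    (hp₂ : ∀ b, pC (g b) = algebraMap (RPrime k) (LaurentPolynomial k) (pB b))
    -- componentwise short exactness
    (hiM : Function.Injective iM) (hiP : Function.Injective iP) (hiN : Function.Injective iN)
    (hpA : Function.Surjective pA) (hpC : Function.Surjective pC)
    (hpB : Function.Surjective pB)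
    (hexA : LinearMap.range iM = LinearMap.ker pA)
    (hexC : LinearMap.range iP = LinearMap.ker pC)
    (hexB : LinearMap.range iN = LinearMap.ker pB) :
    ∃ (y z : P) (φA : A ≃ₗ[Polynomial k] M × Polynomial k)
      (φC : C ≃ₗ[LaurentPolynomial k] P × LaurentPolynomial k)
      (φB : B ≃ₗ[RPrime k] N × RPrime k),
      -- `φ` identifies the structure maps of the middle term with those of `E(y,z)`
      (∀ a, φC (f a) =
        (σ (φA a).1 + (φA a).2 • y,
          algebraMap (Polynomial k) (LaurentPolynomial k) (φA a).2)) ∧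
      (∀ b, φC (g b) =
        (τ (φB b).1 + (φB b).2 • z,
          algebraMap (RPrime k) (LaurentPolynomial k) (φB b).2)) ∧
      -- `φ` is compatible with the inclusion of `(M →σ P ←τ N)` ...
      (∀ m, φA (iM m) = (m, 0)) ∧ (∀ p, φC (iP p) = (p, 0)) ∧ (∀ x, φB (iN x) = (x, 0)) ∧
      -- ... and with the projection onto `O(0)`
      (∀ a, pA a = (φA a).2) ∧ (∀ c, pC c = (φC c).2) ∧ (∀ b, pB b = (φB b).2) :=
  stmt9_general σ τ f g iM iP iN hi₁ hi₂ pA pC pB hp₁ hp₂ hiM hiP hiN hpA hpB hexA hexC hexB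
end
end

section
/- Let R be a ring and A an R-module admitting an ordinal-indexed filtration (A_α)_{α≤λ} by submodules which is increasing, continuous at limit ordinals (A_β = ∪_{α<β} A_α for every limit ordinal β ≤ λ), with A_0 = 0, A_λ = A, and such that A_{α+1}/A_α is a countably generated projective R-module for every α with α+1 ≤ λ. Then A is isomorphic to a direct sum of countably generated projective R-modules; in particular A is a projective R-module. -/
universe u v

/-! Since `F (α + 1) / F α` is projective, `F α` has a complement `G α ≅ F (α + 1) / F α` in
`F (α + 1)`. Transfinite induction, using continuity at limits, gives `F β = ⨆ α < β, G α`; as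
each `G α` meets `F α`, the sum of the earlier ones, trivially, the `G α` for `α < λ` are
independent and span `F λ = A`. -/

theorem iSupIndep_of_disjoint_biSup_lt {ι α : Type*} [LinearOrder ι] [CompleteLattice α]
    [IsModularLattice α] [IsCompactlyGenerated α] {f : ι → α}
    (h : ∀ i, Disjoint (f i) (⨆ j < i, f j)) : iSupIndep f := by
  classical
  refine iSupIndep_iff_supIndep.2 fun s => ?_
  induction s using Finset.induction_on_max with
  | empty => exact Finset.supIndep_empty f
  | insert i s hlt ih =>
    exact ih.insert <| (h i).mono_right <|
      Finset.sup_le fun j hj => le_iSup₂_of_le j (hlt j hj) le_rfl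

theorem iSup_lt_add_one {ι α : Type*} [LinearOrder ι] [Add ι] [One ι] [SuccAddOrder ι]
    [NoMaxOrder ι] [CompleteLattice α] (f : ι → α) (i : ι) :
    ⨆ j < i + 1, f j = (⨆ j < i, f j) ⊔ f i := by
  simp [Order.lt_add_one_iff, le_iff_lt_or_eq, iSup_or, iSup_sup_eq]

theorem Ordinal.eq_biSup_lt_of_eq_sup_add_one {α : Type*} [CompleteLattice α] {lam : Ordinal}
    {F G : Ordinal → α} (h0 : F 0 = ⊥) (hsucc : ∀ β < lam, F (β + 1) = F β ⊔ G β)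
    (hlim : ∀ β ≤ lam, Order.IsSuccLimit β → F β = ⨆ γ < β, F γ) :
    ∀ β ≤ lam, F β = ⨆ γ < β, G γ := by
  intro β
  induction β using Ordinal.limitRecOn with
  | zero => simp [h0]
  | add_one β ih =>
    intro hβ
    have hβ' : β < lam := Order.add_one_le_iff.1 hβ
    rw [hsucc β hβ', ih hβ'.le, iSup_lt_add_one]
  | limit β hβ ih =>
    intro hβl
    rw [hlim β hβl hβ]
    refine le_antisymm (iSup₂_le fun γ hγ => ?_) (iSup₂_le fun γ hγ => ?_)
    · rw [ih γ hγ (hγ.le.trans hβl)]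
      exact iSup₂_le fun δ hδ => le_iSup₂_of_le δ (hδ.trans hγ) le_rfl
    · have hγ' : γ + 1 < β := hβ.add_one_lt hγ
      refine le_iSup₂_of_le (γ + 1) hγ' ?_
      rw [ih _ hγ' (hγ'.le.trans hβl)]
      exact le_iSup₂_of_le γ (Order.lt_add_one_iff.2 le_rfl) le_rfl

theorem Submodule.exists_isCompl_of_projective_quotient {R M : Type*} [Ring R] [AddCommGroup M]
    [Module R M] (K : Submodule R M) [Module.Projective R (M ⧸ K)] :
    ∃ G : Submodule R M, IsCompl K G := by
  obtain ⟨s, hs⟩ := K.mkQ.exists_rightInverse_of_surjective K.range_mkQ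
  have hidem : IsIdempotentElem (s ∘ₗ K.mkQ) := by
    rw [IsIdempotentElem, Module.End.mul_eq_comp, LinearMap.comp_assoc,
      ← LinearMap.comp_assoc K.mkQ, hs]
    rfl
  refine ⟨LinearMap.range s, ?_⟩
  have := (LinearMap.IsIdempotentElem.isCompl hidem).symm
  rwa [LinearMap.range_comp_of_range_eq_top _ K.range_mkQ,
    LinearMap.ker_comp_of_ker_eq_bot _ (LinearMap.ker_eq_bot_of_inverse hs), K.ker_mkQ] at this

theorem Submodule.exists_disjoint_sup_eq_of_projective_quotient {R A : Type*} [Ring R]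
    [AddCommGroup A] [Module R A] {K N : Submodule R A} (hKN : K ≤ N)
    [Module.Projective R (N ⧸ K.comap N.subtype)] :
    ∃ G : Submodule R A, Disjoint K G ∧ K ⊔ G = N ∧
      Nonempty (G ≃ₗ[R] N ⧸ K.comap N.subtype) := by
  obtain ⟨G, hG⟩ := (K.comap N.subtype).exists_isCompl_of_projective_quotient
  have hK : (K.comap N.subtype).map N.subtype = K := by
    rw [map_comap_subtype, inf_eq_right.2 hKN]
  refine ⟨G.map N.subtype, hK ▸ disjoint_map N.injective_subtype hG.disjoint, ?_, ⟨?_⟩⟩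
  · rw [← hK, ← map_sup, hG.sup_eq_top, map_top, range_subtype]
  · exact (G.equivMapOfInjective _ N.injective_subtype).symm ≪≫ₗ
      (quotientEquivOfIsCompl _ _ hG).symm

theorem Submodule.exists_countable_span_eq_of_linearEquiv {R A M : Type*} [Semiring R]
    [AddCommMonoid A] [Module R A] [AddCommMonoid M] [Module R M] {G : Submodule R A}
    (e : M ≃ₗ[R] G) {s : Set M} (hs : s.Countable) (hspan : span R s = ⊤) :
    ∃ t : Set A, t.Countable ∧ span R t = G := by
  refine ⟨(G.subtype ∘ₗ e.toLinearMap) '' s, hs.image _, ?_⟩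
  rw [← map_span, hspan, map_top, LinearMap.range_comp, LinearEquiv.range, map_top,
    range_subtype]

theorem Module.Projective.of_iSupIndep {R A ι : Type*} [Ring R] [AddCommGroup A] [Module R A]
    {G : ι → Submodule R A} (hind : iSupIndep G) (hsup : ⨆ i, G i = ⊤)
    [∀ i, Module.Projective R (G i)] : Module.Projective R A := by
  classical
  exact .of_equiv (LinearEquiv.ofBijective (DirectSum.coeLinearMap G)
    (DirectSum.isInternal_submodule_of_iSupIndep_of_iSup_eq_top hind hsup))

/-- if an `R`-module `A` is a direct transfinite extension of countably
generated projective modules (i.e. it admits an increasing continuous ordinal-indexed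
filtration starting at `0`, ending at `A`, with countably generated projective consecutive
quotients), then `A` is an (internal) direct sum of countably generated projective
submodules; in particular `A` is projective. -/
theorem stmt12 {R : Type u} [Ring R] {A : Type v} [AddCommGroup A] [Module R A]
    (lam : Ordinal) (F : Ordinal → Submodule R A)
    (hmono : ∀ α β, α ≤ β → β ≤ lam → F α ≤ F β)
    (h0 : F 0 = ⊥) (htop : F lam = ⊤)
    (hcont : ∀ β ≤ lam, Order.IsSuccLimit β → F β = ⨆ α < β, F α)
    (hproj : ∀ α, α + 1 ≤ lam →
      Module.Projective R (↥(F (α + 1)) ⧸ Submodule.comap (F (α + 1)).subtype (F α)))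
    (hcg : ∀ α, α + 1 ≤ lam →
      ∃ s : Set (↥(F (α + 1)) ⧸ Submodule.comap (F (α + 1)).subtype (F α)),
        s.Countable ∧ Submodule.span R s = ⊤) :
    (∃ (ι : Type v) (G : ι → Submodule R A),
      iSupIndep G ∧ (⨆ i, G i) = ⊤ ∧
      ∀ i, Module.Projective R ↥(G i) ∧
        ∃ s : Set A, s.Countable ∧ Submodule.span R s = G i) ∧
    Module.Projective R A := by
  have hsplit : ∀ α < lam, ∃ G : Submodule R A, Disjoint (F α) G ∧ F (α + 1) = F α ⊔ G ∧
      Module.Projective R G ∧ ∃ s : Set A, s.Countable ∧ Submodule.span R s = G := by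
    intro α hα
    have hα' : α + 1 ≤ lam := Order.add_one_le_iff.2 hα
    have := hproj α hα'
    obtain ⟨G, hdisj, hsup, ⟨e⟩⟩ :=
      Submodule.exists_disjoint_sup_eq_of_projective_quotient (hmono α _ le_self_add hα')
    obtain ⟨s, hs, hspan⟩ := hcg α hα'
    exact ⟨G, hdisj, hsup.symm, .of_equiv e.symm,
      Submodule.exists_countable_span_eq_of_linearEquiv e.symm hs hspan⟩
  choose! G hdisj hsucc hGproj hGcg using hsplit
  have hF := Ordinal.eq_biSup_lt_of_eq_sup_add_one h0 hsucc hcont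
  let g : Set.Iio lam → Submodule R A := fun α => G α
  have hind : iSupIndep g := iSupIndep_of_disjoint_biSup_lt fun α => by
    refine (hdisj α α.2).symm.mono_right ?_
    rw [hF α α.2.le]
    exact iSup₂_le fun γ hγ => le_iSup₂_of_le γ.1 hγ le_rfl
  have hsup : ⨆ α, g α = ⊤ := by
    rw [← htop, hF lam le_rfl, iSup_subtype']
    rfl
  refine ⟨⟨Set.range g, (↑), (sSupIndep_iff _).1 hind.sSupIndep_range,
    (iSup_range' id g).trans hsup, ?_⟩, ?_⟩
  · rintro ⟨_, α, rfl⟩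
    exact ⟨hGproj α α.2, hGcg α α.2⟩
  · have (α : Set.Iio lam) : Module.Projective R (g α) := hGproj α α.2
    exact .of_iSupIndep hind hsup
end

section
/- Let M →σ P ←τ N be a quasi-coherent representation and let E be any R-module, with ι : E → S⁻¹E the canonical localization map of E at S (so S⁻¹E is an L-module, hence also an R'-module by restriction). Then the assignment (α, β, γ) ↦ α is a bijection between the set of morphisms of representations from (M →σ P ←τ N) to (E →ι S⁻¹E ←id S⁻¹E) — i.e., triples consisting of an R-linear map α : M → E, an L-linear map β : P → S⁻¹E and an R'-linear map γ : N → S⁻¹E satisfying β ∘ σ = ι ∘ α and β ∘ τ = γ — and the set of R-linear maps M → E. -/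
/-!
Setup (context of the paper): a quasi-coherent sheaf on `P¹(k)` is identified with a
quasi-coherent representation `M →σ P ←τ N` where `M` is a module over `R = k[X]`,
`N` is a module over `R' = k[Y]` (with `Y` playing the role of `X⁻¹`), `P` is a module
over the Laurent polynomial ring `L = k[X,X⁻¹]`, `σ` exhibits `P` as the localization of
`M` at the powers of `X` and `τ` exhibits `P` as the localization of `N` at the powers
of `Y`.  For `n ∈ ℤ`, the sheaf `O(n)` is the representation `R → L ← R'` whose left map
sends `p` to `p·Xⁿ` and whose right map is the canonical localization map.
-/

noncomputable section

open Polynomial LaurentPolynomial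

section Aux
variable {k : Type*} [Field k] {Q : Type*} [AddCommGroup Q] [Module (LaurentPolynomial k) Q]
    [Module (Polynomial k) Q] [IsScalarTower (Polynomial k) (LaurentPolynomial k) Q]

theorem stmt14_smul_T (n : ℕ) (q : Q) :
    ((X : Polynomial k) ^ n) • q = (T (n : ℤ) : LaurentPolynomial k) • q := by
  rw [← algebraMap_smul (LaurentPolynomial k) ((X : Polynomial k) ^ n) q,
    LaurentPolynomial.algebraMap_X_pow]

theorem stmt14_unit (s : Submonoid.powers (Polynomial.X : Polynomial k)) :
    IsUnit ((algebraMap (Polynomial k) (Module.End (Polynomial k) Q)) s) := by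
  obtain ⟨n, hn⟩ := s.2
  refine isUnit_iff_exists.2
    ⟨Algebra.lsmul (Polynomial k) (Polynomial k) Q (T (-(n : ℤ)) : LaurentPolynomial k), ?_, ?_⟩ <;>
  · ext q
    simp only [Module.algebraMap_end_apply, Algebra.lsmul_coe,
      Module.End.mul_apply, Module.End.one_apply, ← hn]
    rw [stmt14_smul_T, ← mul_smul, ← T_add]
    simp

omit [Module (Polynomial k) Q] [IsScalarTower (Polynomial k) (LaurentPolynomial k) Q] in
theorem stmt14_T_smul_inj (n : ℕ) {q q' : Q}
    (h : (T (n : ℤ) : LaurentPolynomial k) • q = (T (n : ℤ) : LaurentPolynomial k) • q') :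
    q = q' := by
  have := congrArg (fun z => (T (-(n : ℤ)) : LaurentPolynomial k) • z) h
  simp only [← mul_smul, ← T_add, neg_add_cancel, T_zero, one_smul] at this
  exact this

end Aux

/-- adjunction: for a quasi-coherent representation `M →σ P ←τ N` and an
`R`-module `E` with localization map `ι : E → S⁻¹E` (the `L`-module `Q` playing the role
of `S⁻¹E`, with its `R'`-module structure obtained by restriction), the assignment
`(α, β, γ) ↦ α` is a bijection between morphisms of representations
`(M →σ P ←τ N) → (E →ι S⁻¹E ←id S⁻¹E)` and `R`-linear maps `M → E`. -/
theorem stmt14 {k : Type*} [Field k]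
    {M N P : Type*} [AddCommGroup M] [Module (Polynomial k) M]
    [AddCommGroup N] [Module (RPrime k) N]
    [AddCommGroup P] [Module (LaurentPolynomial k) P]
    [Module (Polynomial k) P] [IsScalarTower (Polynomial k) (LaurentPolynomial k) P]
    [Module (RPrime k) P] [IsScalarTower (RPrime k) (LaurentPolynomial k) P]
    (σ : M →ₗ[Polynomial k] P) (τ : N →ₗ[RPrime k] P)
    [IsLocalizedModule (Submonoid.powers (Polynomial.X : Polynomial k)) σ]
    [IsLocalizedModule (Submonoid.powers (Yvar k)) τ]
    {E Q : Type*} [AddCommGroup E] [Module (Polynomial k) E]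
    [AddCommGroup Q] [Module (LaurentPolynomial k) Q]
    [Module (Polynomial k) Q] [IsScalarTower (Polynomial k) (LaurentPolynomial k) Q]
    [Module (RPrime k) Q] [IsScalarTower (RPrime k) (LaurentPolynomial k) Q]
    (ι : E →ₗ[Polynomial k] Q)
    [IsLocalizedModule (Submonoid.powers (Polynomial.X : Polynomial k)) ι] :
    Function.Bijective
      (fun t : {t : (M →ₗ[Polynomial k] E) × (P →ₗ[LaurentPolynomial k] Q) ×
          (N →ₗ[RPrime k] Q) //
          (∀ m, t.2.1 (σ m) = ι (t.1 m)) ∧ ∀ x, t.2.1 (τ x) = t.2.2 x} =>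
        t.1.1) := by
  constructor
  · rintro ⟨⟨α₁, β₁, γ₁⟩, hc1, hd1⟩ ⟨⟨α₂, β₂, γ₂⟩, hc2, hd2⟩ hα
    have hα' : α₁ = α₂ := hα
    have hβr : (β₁.restrictScalars (Polynomial k)) = (β₂.restrictScalars (Polynomial k)) := by
      have e1 := IsLocalizedModule.lift_unique (Submonoid.powers (Polynomial.X : Polynomial k)) σ
        (ι.comp α₁) (fun s => stmt14_unit s) (β₁.restrictScalars (Polynomial k))
        (by ext m; exact hc1 m)
      have e2 := IsLocalizedModule.lift_unique (Submonoid.powers (Polynomial.X : Polynomial k)) σ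
        (ι.comp α₂) (fun s => stmt14_unit s) (β₂.restrictScalars (Polynomial k))
        (by ext m; exact hc2 m)
      rw [← e1, ← e2, hα']
    have hβ : β₁ = β₂ := LinearMap.ext fun p => congrArg (fun f => f p) hβr
    have hγ : γ₁ = γ₂ := LinearMap.ext fun x => by rw [← hd1 x, ← hd2 x, hβ]
    exact Subtype.ext (by simp only [hα', hβ, hγ])
  · intro α
    have hu : ∀ s : Submonoid.powers (Polynomial.X : Polynomial k),
        IsUnit ((algebraMap (Polynomial k) (Module.End (Polynomial k) Q)) s) :=
      fun s => stmt14_unit s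
    set β₀ := IsLocalizedModule.lift (Submonoid.powers (Polynomial.X : Polynomial k)) σ
      (ι.comp α) hu with hβ₀
    have keyT : ∀ (n : ℕ) (p : P), β₀ ((T (-(n : ℤ)) : LaurentPolynomial k) • p)
        = (T (-(n : ℤ)) : LaurentPolynomial k) • β₀ p := by
      intro n p
      apply stmt14_T_smul_inj (k := k) n
      rw [← stmt14_smul_T, ← map_smul, stmt14_smul_T, ← mul_smul, ← mul_smul, ← T_add]
      simp
    have key : ∀ (l : LaurentPolynomial k) (p : P), β₀ (l • p) = l • β₀ p := by
      intro l p
      obtain ⟨n, f', hf⟩ := l.exists_T_pow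
      have hl : l = toLaurent f' * T (-(n : ℤ)) := by
        rw [hf, mul_assoc, ← T_add]; simp
      rw [hl, mul_smul, ← algebraMap_eq_toLaurent, algebraMap_smul, map_smul, keyT, mul_smul]
      exact (algebraMap_smul (LaurentPolynomial k) f'
        ((T (-(n : ℤ)) : LaurentPolynomial k) • β₀ p)).symm
    let β : P →ₗ[LaurentPolynomial k] Q :=
      { toFun := β₀
        map_add' := β₀.map_add
        map_smul' := key }
    refine ⟨⟨⟨α, β, (β.restrictScalars (RPrime k)).comp τ⟩, fun m => ?_, fun x => rfl⟩, rfl⟩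
    exact IsLocalizedModule.lift_apply (Submonoid.powers (Polynomial.X : Polynomial k)) σ
      (ι.comp α) hu m
end
end
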